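/- Let K be a subsemiheap of the extended bicyclic semigroup containing a_{α₀, β₀+p}, a_{α₀+q, β₀+q}, and a_{α₀+r, β₀} with p, q, r ≥ 1. If q < r < p, then the triple product a_{α₀,β₀+p} (a_{α₀+q,β₀+q})* a_{α₀+r,β₀} equals a_{α₀, β₀+p-r}; hence K contains an element a_{α₀,β₀+p'} with 1 ≤ p' < p whenever additionally r < p and q ≤ p. -/

import Mathlib

/-- The extended bicyclic semigroup: pairs of integers with this product. -/
def emul (a b : ℤ × ℤ) : ℤ × ℤ :=
  (a.1 + b.1 - min a.2 b.1, a.2 + b.2 - min a.2 b.1)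

/-- The involution (i,j)* = (j,i). -/
def estar (a : ℤ × ℤ) : ℤ × ℤ := (a.2, a.1)

/-- The triple product x y* z. -/
def tri (x y z : ℤ × ℤ) : ℤ × ℤ := emul (emul x (estar y)) z

/-- A subsemiheap: a subset closed under the triple product x y* z. -/
def IsSubsemiheap (K : Set (ℤ × ℤ)) : Prop :=
  ∀ x ∈ K, ∀ y ∈ K, ∀ z ∈ K, tri x y z ∈ K

theorem emul_of_le {a b c d : ℤ} (h : c ≤ b) : emul (a, b) (c, d) = (a, b - c + d) := by
  simp only [emul, min_eq_right h, Prod.mk.injEq]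
  constructor <;> ring

theorem tri_of_le {a b c d e f : ℤ} (hdb : d ≤ b) (he : e ≤ b - d + c) :
    tri (a, b) (c, d) (e, f) = (a, b - d + c - e + f) := by
  rw [tri, estar, emul_of_le hdb, emul_of_le he]

theorem stmt17_general (K : Set (ℤ × ℤ)) (hK : IsSubsemiheap K) (α₀ β₀ : ℤ)
    (p q r : ℤ) (hr : 1 ≤ r)
    (h1 : ((α₀, β₀ + p) : ℤ × ℤ) ∈ K)
    (h2 : ((α₀ + q, β₀ + q) : ℤ × ℤ) ∈ K)
    (h3 : ((α₀ + r, β₀) : ℤ × ℤ) ∈ K)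
    (hqr : q < r) (hrp : r < p) :
    tri (α₀, β₀ + p) (α₀ + q, β₀ + q) (α₀ + r, β₀) = (α₀, β₀ + p - r) ∧
    ∃ p' : ℤ, 1 ≤ p' ∧ p' < p ∧ ((α₀, β₀ + p') : ℤ × ℤ) ∈ K := by
  have key : tri (α₀, β₀ + p) (α₀ + q, β₀ + q) (α₀ + r, β₀) = (α₀, β₀ + p - r) := by
    rw [tri_of_le (by omega) (by omega)]
    congr 1
    ring
  refine ⟨key, p - r, by omega, by omega, ?_⟩
  have hmem := hK _ h1 _ h2 _ h3
  rwa [key, add_sub_assoc] at hmem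

theorem stmt17 (K : Set (ℤ × ℤ)) (hK : IsSubsemiheap K) (α₀ β₀ : ℤ)
    (p q r : ℤ) (hp : 1 ≤ p) (hq : 1 ≤ q) (hr : 1 ≤ r)
    (h1 : ((α₀, β₀ + p) : ℤ × ℤ) ∈ K)
    (h2 : ((α₀ + q, β₀ + q) : ℤ × ℤ) ∈ K)
    (h3 : ((α₀ + r, β₀) : ℤ × ℤ) ∈ K)
    (hqr : q < r) (hrp : r < p) :
    tri (α₀, β₀ + p) (α₀ + q, β₀ + q) (α₀ + r, β₀) = (α₀, β₀ + p - r) ∧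
    ∃ p' : ℤ, 1 ≤ p' ∧ p' < p ∧ ((α₀, β₀ + p') : ℤ × ℤ) ∈ K :=
  stmt17_general K hK α₀ β₀ p q r hr h1 h2 h3 hqr hrp
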